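/- The linear map from gl(7,ℝ) = End(ℝ⁷) to Λ³(ℝ⁷)* given by the infinitesimal action A ↦ −(φ₀(A·, ·, ·) + φ₀(·, A·, ·) + φ₀(·, ·, A·)) on the standard G₂ 3-form φ₀ is surjective. (Consequently the GL(7,ℝ)-orbit of φ₀ is open in Λ³(ℝ⁷)*.) -/

import Mathlib

/-!
The map `A ↦ -A·φ₀` has an explicit right inverse: writing `Pᵢⱼ = Σₖₗ τᵢₖₗ (φ₀)ⱼₖₗ`, the matrix
`-P/12 - Pᵀ/6 + (tr P/36)·1` is sent back to `τ`. Both sides of this identity are alternating in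
their three arguments, so it only has to be checked on the 35 increasing triples of basis vectors.
There the contraction with `φ₀` only sees the three lines of the Fano plane through an index, and
the identity becomes a linear relation between the 35 values of `τ` on basis triples.
-/

/-- The 3-form `dxⁱ ∧ dxʲ ∧ dxᵏ` on `ℝ⁷`, as an alternating map:
`(u,v,w) ↦ det [[uᵢ,uⱼ,uₖ],[vᵢ,vⱼ,vₖ],[wᵢ,wⱼ,wₖ]]`. -/
noncomputable def d3 (i j k : Fin 7) : AlternatingMap ℝ (Fin 7 → ℝ) ℝ (Fin 3) :=
  ((Pi.basisFun ℝ (Fin 3)).det).compLinearMap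
    (LinearMap.pi fun m : Fin 3 => LinearMap.proj (![i, j, k] m))

/-- The standard `G₂` 3-form
`φ₀ = dx^{123} + dx^{145} + dx^{167} + dx^{246} − dx^{257} − dx^{347} − dx^{356}`
(0-indexed coordinates), as an alternating 3-form on `ℝ⁷`. -/
noncomputable def phi0 : AlternatingMap ℝ (Fin 7 → ℝ) ℝ (Fin 3) :=
  d3 0 1 2 + d3 0 3 4 + d3 0 5 6 + d3 1 3 5 - d3 1 4 6 - d3 2 3 6 - d3 2 4 5

theorem MultilinearMap.sum_compLinearMap_update_apply {R M N ι : Type*} [Semiring R]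
    [AddCommMonoid M] [Module R M] [AddCommMonoid N] [Module R N] [Fintype ι] [DecidableEq ι]
    (f : MultilinearMap R (fun _ : ι => M) N) (A : M →ₗ[R] M) (m : ι → M) :
    (∑ k, f.compLinearMap (Function.update (fun _ => LinearMap.id) k A)) m =
      ∑ k, f (Function.update m k (A (m k))) := by
  simp only [sum_apply, compLinearMap_apply]
  refine Finset.sum_congr rfl fun k _ => congrArg f ?_
  ext l
  rcases eq_or_ne l k with rfl | hl <;> simp [*]

namespace AlternatingMap

variable {R M N : Type*} [Semiring R] [AddCommMonoid M] [Module R M] [AddCommGroup N]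
  [Module R N]

theorem map_update_add_map_update_eq_zero {ι : Type*} [DecidableEq ι] (f : M [⋀^ι]→ₗ[R] N)
    (A : M →ₗ[R] M) {m : ι → M} {i j : ι} (hm : m i = m j) (hij : i ≠ j) :
    f (Function.update m i (A (m i))) + f (Function.update m j (A (m j))) = 0 := by
  have hswap : m ∘ Equiv.swap i j = m := by
    ext l
    simp only [Function.comp_apply, Equiv.swap_apply_def]
    split_ifs <;> simp_all
  have : Function.update m j (A (m j)) = Function.update m i (A (m i)) ∘ Equiv.swap i j := by
    rw [Function.update_comp_equiv, hswap, Equiv.symm_swap, Equiv.swap_apply_left, hm]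
  rw [this]
  exact f.map_add_swap _ hij

section InfinitesimalAction

variable {ι : Type*} [Fintype ι] [DecidableEq ι]

/-- The derivative at `t = 0` of `f ∘ exp (t A)`. -/
def infinitesimalAction (A : M →ₗ[R] M) (f : M [⋀^ι]→ₗ[R] N) : M [⋀^ι]→ₗ[R] N where
  toMultilinearMap :=
    ∑ k, f.toMultilinearMap.compLinearMap (Function.update (fun _ => LinearMap.id) k A)
  map_eq_zero_of_eq' m i j hm hij := by
    rw [MultilinearMap.toFun_eq_coe, MultilinearMap.sum_compLinearMap_update_apply,
      coe_multilinearMap, Fintype.sum_eq_add i j hij fun k hk => f.map_eq_zero_of_eq _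
        (by simp [Function.update_of_ne hk.1.symm, Function.update_of_ne hk.2.symm, hm]) hij]
    exact f.map_update_add_map_update_eq_zero A hm hij

theorem infinitesimalAction_apply (A : M →ₗ[R] M) (f : M [⋀^ι]→ₗ[R] N) (m : ι → M) :
    infinitesimalAction A f m = ∑ k, f (Function.update m k (A (m k))) :=
  MultilinearMap.sum_compLinearMap_update_apply _ A m

end InfinitesimalAction

theorem infinitesimalAction_apply_fin_three (A : M →ₗ[R] M) (f : M [⋀^Fin 3]→ₗ[R] N)
    (u v w : M) :
    infinitesimalAction A f ![u, v, w] = f ![A u, v, w] + f ![u, A v, w] + f ![u, v, A w] := by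
  rw [infinitesimalAction_apply, Fin.sum_univ_three]
  congr 3 <;> ext l <;> fin_cases l <;> rfl

section FinThree

variable (f : M [⋀^Fin 3]→ₗ[R] N) (u v w : M)

theorem map_fin_three_swap₀₁ : f ![v, u, w] = -f ![u, v, w] := by
  rw [← f.map_swap _ (show (0 : Fin 3) ≠ 1 by decide)]
  congr 1; ext l; fin_cases l <;> rfl

theorem map_fin_three_swap₁₂ : f ![u, w, v] = -f ![u, v, w] := by
  rw [← f.map_swap _ (show (1 : Fin 3) ≠ 2 by decide)]
  congr 1; ext l; fin_cases l <;> rfl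

theorem map_fin_three_rotate : f ![v, w, u] = f ![u, v, w] := by
  rw [f.map_fin_three_swap₁₂ v u w, f.map_fin_three_swap₀₁, neg_neg]

theorem map_fin_three_self₀₁ : f ![u, u, w] = 0 :=
  f.map_eq_zero_of_eq _ (i := 0) (j := 1) rfl (by decide)

theorem map_fin_three_self₁₂ : f ![u, w, w] = 0 :=
  f.map_eq_zero_of_eq _ (i := 1) (j := 2) rfl (by decide)

end FinThree

end AlternatingMap

theorem Module.Basis.ext_alternating_of_strictMono {ι R M N : Type*} [LinearOrder ι]
    [CommSemiring R] [AddCommMonoid M] [Module R M] [AddCommGroup N] [Module R N] {n : ℕ}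
    {f g : M [⋀^Fin n]→ₗ[R] N} (b : Module.Basis ι R M)
    (h : ∀ v : Fin n → ι, StrictMono v → f (b ∘ v) = g (b ∘ v)) : f = g := by
  refine b.ext_alternating fun v hv => ?_
  set σ := Tuple.sort v
  have hmono : StrictMono (v ∘ σ) :=
    (Tuple.monotone_sort v).strictMono_of_injective (hv.comp σ.injective)
  have hsort : (fun i => b (v i)) = (b ∘ v ∘ σ) ∘ σ.symm := by ext; simp
  rw [hsort, f.map_perm, g.map_perm, h _ hmono]

section Contraction

variable {R : Type*} [Ring R] {n : ℕ}

def contraction (τ σ : (Fin n → R) [⋀^Fin 3]→ₗ[R] R) : Matrix (Fin n) (Fin n) R :=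
  Matrix.of fun i j => ∑ k, ∑ l,
    τ ![Pi.single i 1, Pi.single k 1, Pi.single l 1] *
      σ ![Pi.single j 1, Pi.single k 1, Pi.single l 1]

theorem contraction_add_right (τ σ σ' : (Fin n → R) [⋀^Fin 3]→ₗ[R] R) :
    contraction τ (σ + σ') = contraction τ σ + contraction τ σ' := by
  ext i j
  simp [contraction, mul_add, Finset.sum_add_distrib]

theorem contraction_sub_right (τ σ σ' : (Fin n → R) [⋀^Fin 3]→ₗ[R] R) :
    contraction τ (σ - σ') = contraction τ σ - contraction τ σ' := by
  ext i j
  simp [contraction, mul_sub, Finset.sum_sub_distrib]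

end Contraction

theorem d3_apply (i j k : Fin 7) (u v w : Fin 7 → ℝ) :
    d3 i j k ![u, v, w] =
      u i * v j * w k - u i * v k * w j - u j * v i * w k
        + u j * v k * w i + u k * v i * w j - u k * v j * w i := by
  simp only [d3, AlternatingMap.compLinearMap_apply, Module.Basis.det_apply, Matrix.det_fin_three,
    Module.Basis.toMatrix_apply, Pi.basisFun_repr, LinearMap.pi_apply, LinearMap.coe_proj,
    Function.eval, Matrix.cons_val_zero, Matrix.cons_val_one, Matrix.cons_val]
  ring

theorem contraction_d3 (τ : (Fin 7 → ℝ) [⋀^Fin 3]→ₗ[ℝ] ℝ) (a b c i j : Fin 7) :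
    contraction τ (d3 a b c) i j =
      2 * ((if a = j then τ ![Pi.single i 1, Pi.single b 1, Pi.single c 1] else 0) +
        (if b = j then τ ![Pi.single i 1, Pi.single c 1, Pi.single a 1] else 0) +
        (if c = j then τ ![Pi.single i 1, Pi.single a 1, Pi.single b 1] else 0)) := by
  simp only [contraction, Matrix.of_apply, d3_apply, Pi.single_apply, mul_ite, mul_one, mul_zero,
    mul_sub, mul_add, Finset.sum_add_distrib, Finset.sum_sub_distrib, Finset.sum_ite_eq,
    Finset.mem_univ, if_true]
  rw [τ.map_fin_three_swap₁₂ _ (Pi.single b 1) (Pi.single c 1),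
    τ.map_fin_three_swap₁₂ _ (Pi.single c 1) (Pi.single a 1),
    τ.map_fin_three_swap₁₂ _ (Pi.single a 1) (Pi.single b 1)]
  split_ifs <;> ring

theorem trace_contraction_d3 (τ : (Fin 7 → ℝ) [⋀^Fin 3]→ₗ[ℝ] ℝ) (a b c : Fin 7) :
    (contraction τ (d3 a b c)).trace = 6 * τ ![Pi.single a 1, Pi.single b 1, Pi.single c 1] := by
  simp only [Matrix.trace, Matrix.diag_apply, contraction_d3, ← Finset.mul_sum,
    Finset.sum_add_distrib, Finset.sum_ite_eq, Finset.mem_univ, if_true]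
  rw [τ.map_fin_three_rotate (Pi.single a 1), τ.map_fin_three_rotate (Pi.single b 1),
    τ.map_fin_three_rotate (Pi.single a 1)]
  ring

/-- By Schur's lemma the `G₂`-equivariant maps `Λ³ → gl(7)` are `α P + β Pᵀ + γ (tr P) 1` with
`P = contraction τ φ₀`; the coefficients are those making it a right inverse of `A ↦ -A·φ₀` on
each of the irreducible summands `Λ³₁`, `Λ³₇`, `Λ³₂₇`. -/
noncomputable def g2RightInverse (τ : (Fin 7 → ℝ) [⋀^Fin 3]→ₗ[ℝ] ℝ) :
    Matrix (Fin 7) (Fin 7) ℝ :=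
  -(12⁻¹ : ℝ) • contraction τ phi0 - (6⁻¹ : ℝ) • (contraction τ phi0).transpose +
    ((contraction τ phi0).trace / 36) • 1

set_option maxHeartbeats 4000000 in
theorem infinitesimalAction_g2RightInverse_apply_single (τ : (Fin 7 → ℝ) [⋀^Fin 3]→ₗ[ℝ] ℝ)
    {a b c : Fin 7} (hab : a < b) (hbc : b < c) :
    AlternatingMap.infinitesimalAction (g2RightInverse τ).mulVecLin phi0
        ![Pi.single a 1, Pi.single b 1, Pi.single c 1] =
      -τ ![Pi.single a 1, Pi.single b 1, Pi.single c 1] := by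
  -- The order hypotheses only orient these rules, so that `simp` sorts the basis indices.
  have sort₀₁ : ∀ i j k : Fin 7, j < i → τ ![Pi.single i 1, Pi.single j 1, Pi.single k 1] =
      -τ ![Pi.single j 1, Pi.single i 1, Pi.single k 1] := fun _ _ _ _ => τ.map_fin_three_swap₀₁ ..
  have sort₁₂ : ∀ i j k : Fin 7, k < j → τ ![Pi.single i 1, Pi.single j 1, Pi.single k 1] =
      -τ ![Pi.single i 1, Pi.single k 1, Pi.single j 1] := fun _ _ _ _ => τ.map_fin_three_swap₁₂ ..
  rw [AlternatingMap.infinitesimalAction_apply_fin_three]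
  simp only [Matrix.mulVecLin_apply, Matrix.mulVec_single_one]
  fin_cases a <;> fin_cases b <;> fin_cases c <;> try (simp at hab hbc; done)
  -- Evaluating `φ₀` first leaves only three entries of `g2RightInverse τ` to expand.
  all_goals
    simp only [phi0, AlternatingMap.add_apply, AlternatingMap.sub_apply, d3_apply, Matrix.col_apply,
      Fin.isValue, Fin.mk_one, Fin.reduceEq, Fin.reduceFinMk, Fin.zero_eta, Pi.single_eq_of_ne,
      Pi.single_eq_same, ne_eq, not_false_eq_true, one_ne_zero, zero_ne_one, mul_one, one_mul,
      mul_zero, zero_mul, add_zero, zero_add, sub_zero, zero_sub, sub_self, sub_neg_eq_add]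
    simp only [g2RightInverse, phi0, Matrix.add_apply, Matrix.sub_apply, Matrix.smul_apply,
      Matrix.transpose_apply, Matrix.one_apply, Matrix.trace_add, Matrix.trace_sub,
      trace_contraction_d3, contraction_add_right, contraction_sub_right, contraction_d3]
    simp only [Fin.isValue, Fin.reduceEq, Fin.reduceLT, ↓reduceIte, sort₀₁, sort₁₂,
      τ.map_fin_three_self₀₁, τ.map_fin_three_self₁₂, smul_eq_mul, mul_zero, add_zero, zero_add,
      sub_zero, zero_sub]
    ring

theorem infinitesimalAction_g2RightInverse (τ : (Fin 7 → ℝ) [⋀^Fin 3]→ₗ[ℝ] ℝ) :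
    AlternatingMap.infinitesimalAction (g2RightInverse τ).mulVecLin phi0 = -τ := by
  refine (Pi.basisFun ℝ (Fin 7)).ext_alternating_of_strictMono fun v hv => ?_
  have hbasis : ⇑(Pi.basisFun ℝ (Fin 7)) ∘ v =
      ![Pi.single (v 0) 1, Pi.single (v 1) 1, Pi.single (v 2) 1] := by
    ext l : 1
    fin_cases l <;> simp
  rw [hbasis]
  exact infinitesimalAction_g2RightInverse_apply_single τ (hv (by decide)) (hv (by decide))

/-- The infinitesimal action `gl(7,ℝ) → Λ³(ℝ⁷)*`,
`A ↦ −(φ₀(A·,·,·) + φ₀(·,A·,·) + φ₀(·,·,A·))`, is surjective: every 3-form on ℝ⁷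
arises this way.  (Consequently the `GL(7,ℝ)`-orbit of `φ₀` is open in `Λ³(ℝ⁷)*`.) -/
theorem g2_infinitesimal_action_surjective
    (τ : AlternatingMap ℝ (Fin 7 → ℝ) ℝ (Fin 3)) :
    ∃ A : Module.End ℝ (Fin 7 → ℝ), ∀ u v w : Fin 7 → ℝ,
      τ ![u, v, w] =
        -(phi0 ![A u, v, w] + phi0 ![u, A v, w] + phi0 ![u, v, A w]) := by
  refine ⟨(g2RightInverse τ).mulVecLin, fun u v w => ?_⟩
  rw [← AlternatingMap.infinitesimalAction_apply_fin_three, ← AlternatingMap.neg_apply,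
    infinitesimalAction_g2RightInverse, neg_neg]
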